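/- Four-term contiguous relation for bilateral series, first form: let a_1,…,a_r, b_1,…,b_m, c, d, g, h, t ∈ ℂ with c ≠ d, cq ≠ d, dq ≠ c, g ≠ q, h ≠ q, and assume every q-shifted factorial of integer index appearing below is defined and nonzero where it occurs in a denominator. For parameters (c',d';g',h') define the bilateral sum Ψ(c',d';g',h') = Σ_{k∈ℤ} [∏_{l=1}^{r}(a_l;q)_k · (c';q)_k (d';q)_k / (∏_{j=1}^{m}(b_j;q)_k · (g';q)_k (h';q)_k)] t^k, and assume each of the four bilateral sums below is absolutely summable. Set K₁ = (c−q)(d−q)(−gh − cdq + cgq + dgq + chq + dhq − ghq − cdq²)/((g−q)(h−q)(cq−d)(dq−c)), K₂ = (c−1)(d−g)(d−h)(c−q)q/((d−c)(g−q)(h−q)(cq−d)), K₃ = (d−1)(c−g)(c−h)(d−q)q/((c−d)(g−q)(h−q)(dq−c)). Then K₁·Ψ(c,d;g,h) + K₂·Ψ(cq,d/q;g,h) + K₃·Ψ(c/q,dq;g,h) + Ψ(c/q,d/q;g/q,h/q) = 0. -/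

import Mathlib

open Finset

noncomputable section

/-- Infinite q-shifted factorial `(a;q)_∞`. -/
def qpInf (q a : ℂ) : ℂ := ∏' j : ℕ, (1 - a * q ^ j)

/-- The q-shifted factorial `(a;q)_k` of integer index `k`,
`(a;q)_k = (a;q)_∞ / (a q^k;q)_∞`. -/
def qpz (q a : ℂ) (k : ℤ) : ℂ := qpInf q a / qpInf q (a * q ^ k)

/-- The `k`-th term of the bilateral basic hypergeometric series
with numerator parameters `a₁,…,a_r, c, d`, denominator parameters
`b₁,…,b_m, g, h` and argument `t`. -/
def biTerm (q t : ℂ) {r m : ℕ} (a : Fin r → ℂ) (b : Fin m → ℂ)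
    (c d g h : ℂ) (k : ℤ) : ℂ :=
  (∏ l, qpz q (a l) k) * qpz q c k * qpz q d k
    / ((∏ j, qpz q (b j) k) * qpz q g k * qpz q h k) * t ^ k

/-! Shifting a parameter by the base multiplies `(a;q)_k` by a rational function of `x = q^k`:
`(aq;q)_k = (1 - a x)/(1 - a) · (a;q)_k` and `(a/q;q)_k = (q - a)/(q - a x) · (a;q)_k`. Hence the
`k`-th terms of the three shifted series are rational multiples of the `k`-th term of
`Ψ(c,d;g,h)`, and the combination of these multipliers with coefficients `K₁, K₂, K₃, 1`
vanishes identically in `x`. The relation therefore holds term by term, and summing it expresses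
the fourth series through the other three. -/

lemma multipliable_one_sub_mul_pow {q : ℂ} (hq : ‖q‖ < 1) (a : ℂ) :
    Multipliable fun j : ℕ => 1 - a * q ^ j :=
  (Complex.multipliable_one_add_of_summable
    ((summable_geometric_of_norm_lt_one hq).mul_left a).neg).congr
    fun j => by simp only [sub_eq_add_neg]

lemma qpInf_eq_one_sub_mul {q : ℂ} (hq : ‖q‖ < 1) (a : ℂ) :
    qpInf q a = (1 - a) * qpInf q (a * q) := by
  have htail : Multipliable fun j : ℕ => 1 - a * q ^ (j + 1) :=
    (multipliable_one_sub_mul_pow hq (a * q)).congr fun j => by ring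
  unfold qpInf
  rw [tprod_eq_zero_mul' (f := fun j : ℕ => 1 - a * q ^ j) htail, pow_zero, mul_one]
  congr 1
  exact tprod_congr fun j => by ring

lemma one_sub_ne_zero_of_qpInf_ne_zero {q a : ℂ} (hq : ‖q‖ < 1) (ha : qpInf q a ≠ 0) :
    1 - a ≠ 0 :=
  fun h => ha (by rw [qpInf_eq_one_sub_mul hq, h, zero_mul])

lemma sub_mul_zpow_ne_zero_of_qpInf_ne_zero {q c : ℂ} {k : ℤ} (hq0 : q ≠ 0) (hq : ‖q‖ < 1)
    (hc : qpInf q (c * q ^ (k - 1)) ≠ 0) : q - c * q ^ k ≠ 0 := by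
  have hfactor : q - c * q ^ k = q * (1 - c * q ^ (k - 1)) := by
    rw [zpow_sub_one₀ hq0]
    field_simp
  rw [hfactor]
  exact mul_ne_zero hq0 (one_sub_ne_zero_of_qpInf_ne_zero hq hc)

lemma qpz_mul_base {q a : ℂ} (hq : ‖q‖ < 1) (k : ℤ) (ha : 1 - a ≠ 0)
    (hak : 1 - a * q ^ k ≠ 0) :
    qpz q (a * q) k = (1 - a * q ^ k) / (1 - a) * qpz q a k := by
  rw [qpz, qpz, qpInf_eq_one_sub_mul hq a, qpInf_eq_one_sub_mul hq (a * q ^ k),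
    mul_right_comm a]
  field_simp

/-- If `q - a q^k = 0`, both sides are `0`: the left one because its denominator
`qpInf q (a q^(k-1))` has the factor `1 - a q^(k-1)`. -/
lemma qpz_div_base {q : ℂ} (hq0 : q ≠ 0) (hq : ‖q‖ < 1) (a : ℂ) (k : ℤ) :
    qpz q (a / q) k = (q - a) / (q - a * q ^ k) * qpz q a k := by
  have h₁ : a / q * q = a := div_mul_cancel₀ a hq0
  have h₂ : a / q * q ^ k * q = a * q ^ k := by rw [mul_right_comm, h₁]
  rw [qpz, qpInf_eq_one_sub_mul hq (a / q), qpInf_eq_one_sub_mul hq (a / q * q ^ k), h₁, h₂,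
    mul_div_mul_comm, qpz]
  congr 1
  rw [one_sub_div hq0, div_mul_eq_mul_div, one_sub_div hq0, div_div_div_cancel_right₀ hq0]

lemma biTerm_eq_of_qpz_eq (q t : ℂ) {r m : ℕ} (a : Fin r → ℂ) (b : Fin m → ℂ)
    {c d g h c' d' g' h' α β γ δ : ℂ} {k : ℤ}
    (hc : qpz q c' k = α * qpz q c k) (hd : qpz q d' k = β * qpz q d k)
    (hg : qpz q g' k = γ * qpz q g k) (hh : qpz q h' k = δ * qpz q h k) :
    biTerm q t a b c' d' g' h' k = α * β / (γ * δ) * biTerm q t a b c d g h k := by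
  simp only [biTerm, hc, hd, hg, hh]
  ring

section FourTermCoeff

variable {K : Type*} [Field K]

def fourTermCoeff₁ (q c d g h : K) : K :=
  (c-q)*(d-q)*(-(g*h) - c*d*q + c*g*q + d*g*q + c*h*q + d*h*q - g*h*q - c*d*q^2)
    / ((g-q)*(h-q)*(c*q-d)*(d*q-c))

def fourTermCoeff₂ (q c d g h : K) : K :=
  (c-1)*(d-g)*(d-h)*(c-q)*q / ((d-c)*(g-q)*(h-q)*(c*q-d))

def fourTermCoeff₃ (q c d g h : K) : K :=
  (d-1)*(c-g)*(c-h)*(d-q)*q / ((c-d)*(g-q)*(h-q)*(d*q-c))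

lemma fourTermCoeff_combination_eq_zero {q x c d g h : K}
    (hc : 1 - c ≠ 0) (hd : 1 - d ≠ 0) (hcx : q - c * x ≠ 0) (hdx : q - d * x ≠ 0)
    (hcd : c ≠ d) (hcqd : c * q ≠ d) (hdqc : d * q ≠ c) (hg : g ≠ q) (hh : h ≠ q) :
    fourTermCoeff₁ q c d g h
      + fourTermCoeff₂ q c d g h * ((1 - c * x) / (1 - c) * ((q - d) / (q - d * x)))
      + fourTermCoeff₃ q c d g h * ((q - c) / (q - c * x) * ((1 - d * x) / (1 - d)))
      + (q - c) / (q - c * x) * ((q - d) / (q - d * x))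
          / ((q - g) / (q - g * x) * ((q - h) / (q - h * x))) = 0 := by
  have hcd' : c - d ≠ 0 := sub_ne_zero.mpr hcd
  have hdc' : d - c ≠ 0 := sub_ne_zero.mpr hcd.symm
  have hcqd' : c * q - d ≠ 0 := sub_ne_zero.mpr hcqd
  have hdqc' : q * d - c ≠ 0 := by rw [mul_comm]; exact sub_ne_zero.mpr hdqc -- `field_simp`'s form
  have hg' : g - q ≠ 0 := sub_ne_zero.mpr hg
  have hh' : h - q ≠ 0 := sub_ne_zero.mpr hh
  have hqg : q - g ≠ 0 := sub_ne_zero.mpr hg.symm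
  have hqh : q - h ≠ 0 := sub_ne_zero.mpr hh.symm
  have hlast : (q - c) / (q - c * x) * ((q - d) / (q - d * x))
      / ((q - g) / (q - g * x) * ((q - h) / (q - h * x)))
      = (q - c) * (q - d) * ((q - g * x) * (q - h * x))
        / ((q - c * x) * (q - d * x) * ((q - g) * (q - h))) := by
    rw [div_mul_div_comm, div_mul_div_comm, div_div_div_eq]
  rw [hlast, fourTermCoeff₁, fourTermCoeff₂, fourTermCoeff₃]
  field_simp
  ring

end FourTermCoeff

lemma biTerm_four_term_contiguous {q : ℂ} (hq0 : q ≠ 0) (hq : ‖q‖ < 1) (t : ℂ) {r m : ℕ}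
    (a : Fin r → ℂ) (b : Fin m → ℂ) {c d g h : ℂ}
    (hcd : c ≠ d) (hcqd : c * q ≠ d) (hdqc : d * q ≠ c) (hg : g ≠ q) (hh : h ≠ q)
    (hc : ∀ k : ℤ, qpInf q (c * q ^ k) ≠ 0) (hd : ∀ k : ℤ, qpInf q (d * q ^ k) ≠ 0) (k : ℤ) :
    fourTermCoeff₁ q c d g h * biTerm q t a b c d g h k
      + fourTermCoeff₂ q c d g h * biTerm q t a b (c*q) (d/q) g h k
      + fourTermCoeff₃ q c d g h * biTerm q t a b (c/q) (d*q) g h k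
      + biTerm q t a b (c/q) (d/q) (g/q) (h/q) k = 0 := by
  have hc₀ : 1 - c ≠ 0 := by simpa using one_sub_ne_zero_of_qpInf_ne_zero hq (hc 0)
  have hd₀ : 1 - d ≠ 0 := by simpa using one_sub_ne_zero_of_qpInf_ne_zero hq (hd 0)
  have hck := one_sub_ne_zero_of_qpInf_ne_zero hq (hc k)
  have hdk := one_sub_ne_zero_of_qpInf_ne_zero hq (hd k)
  have hcx := sub_mul_zpow_ne_zero_of_qpInf_ne_zero hq0 hq (hc (k - 1))
  have hdx := sub_mul_zpow_ne_zero_of_qpInf_ne_zero hq0 hq (hd (k - 1))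
  have unshifted (e : ℂ) : qpz q e k = 1 * qpz q e k := (one_mul _).symm
  rw [biTerm_eq_of_qpz_eq q t a b (qpz_mul_base hq k hc₀ hck) (qpz_div_base hq0 hq d k)
      (unshifted g) (unshifted h),
    biTerm_eq_of_qpz_eq q t a b (qpz_div_base hq0 hq c k) (qpz_mul_base hq k hd₀ hdk)
      (unshifted g) (unshifted h),
    biTerm_eq_of_qpz_eq q t a b (qpz_div_base hq0 hq c k) (qpz_div_base hq0 hq d k)
      (qpz_div_base hq0 hq g k) (qpz_div_base hq0 hq h k)]
  linear_combination biTerm q t a b c d g h k *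
    fourTermCoeff_combination_eq_zero hc₀ hd₀ hcx hdx hcd hcqd hdqc hg hh

lemma tsum_linear_combination_eq_zero {ι α : Type*} [Field α] [TopologicalSpace α]
    [IsTopologicalRing α] [T2Space α] {f₁ f₂ f₃ f₄ : ι → α} {K₁ K₂ K₃ : α}
    (h₁ : Summable f₁) (h₂ : Summable f₂) (h₃ : Summable f₃)
    (h : ∀ k, K₁ * f₁ k + K₂ * f₂ k + K₃ * f₃ k + f₄ k = 0) :
    K₁ * ∑' k, f₁ k + K₂ * ∑' k, f₂ k + K₃ * ∑' k, f₃ k + ∑' k, f₄ k = 0 := by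
  have h₄ : f₄ = fun k => -(K₁ * f₁ k + K₂ * f₂ k + K₃ * f₃ k) :=
    funext fun k => eq_neg_of_add_eq_zero_right (h k)
  rw [h₄, tsum_neg, ((h₁.mul_left K₁).add (h₂.mul_left K₂)).tsum_add (h₃.mul_left K₃),
    (h₁.mul_left K₁).tsum_add (h₂.mul_left K₂), tsum_mul_left, tsum_mul_left, tsum_mul_left]
  ring

theorem four_term_contiguous_bilateral_first_general
    (q t : ℂ) (hq0 : 0 < ‖q‖) (hq1 : ‖q‖ < 1)
    (r m : ℕ) (a : Fin r → ℂ) (b : Fin m → ℂ) (c d g h : ℂ)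
    (hcd : c ≠ d) (hcqd : c*q ≠ d) (hdqc : d*q ≠ c) (hg : g ≠ q) (hh : h ≠ q)
    (hcdef : ∀ k : ℤ, qpInf q (c * q ^ k) ≠ 0)
    (hddef : ∀ k : ℤ, qpInf q (d * q ^ k) ≠ 0)
    (hs1 : Summable fun k : ℤ => ‖biTerm q t a b c d g h k‖)
    (hs2 : Summable fun k : ℤ => ‖biTerm q t a b (c*q) (d/q) g h k‖)
    (hs3 : Summable fun k : ℤ => ‖biTerm q t a b (c/q) (d*q) g h k‖) :
    (c-q)*(d-q)*(-(g*h) - c*d*q + c*g*q + d*g*q + c*h*q + d*h*q - g*h*q - c*d*q^2)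
        / ((g-q)*(h-q)*(c*q-d)*(d*q-c)) * (∑' k : ℤ, biTerm q t a b c d g h k)
      + (c-1)*(d-g)*(d-h)*(c-q)*q / ((d-c)*(g-q)*(h-q)*(c*q-d))
          * (∑' k : ℤ, biTerm q t a b (c*q) (d/q) g h k)
      + (d-1)*(c-g)*(c-h)*(d-q)*q / ((c-d)*(g-q)*(h-q)*(d*q-c))
          * (∑' k : ℤ, biTerm q t a b (c/q) (d*q) g h k)
      + (∑' k : ℤ, biTerm q t a b (c/q) (d/q) (g/q) (h/q) k) = 0 :=
  tsum_linear_combination_eq_zero hs1.of_norm hs2.of_norm hs3.of_norm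
    (biTerm_four_term_contiguous (norm_pos_iff.mp hq0) hq1 t a b hcd hcqd hdqc hg hh hcdef hddef)

/-- four-term contiguous relation for bilateral basic
hypergeometric series, first form. -/
theorem four_term_contiguous_bilateral_first
    (q t : ℂ) (hq0 : 0 < ‖q‖) (hq1 : ‖q‖ < 1)
    (r m : ℕ) (a : Fin r → ℂ) (b : Fin m → ℂ) (c d g h : ℂ)
    (hcd : c ≠ d) (hcqd : c*q ≠ d) (hdqc : d*q ≠ c) (hg : g ≠ q) (hh : h ≠ q)
    (hadef : ∀ (l : Fin r) (k : ℤ), qpInf q (a l * q ^ k) ≠ 0)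
    (hcdef : ∀ k : ℤ, qpInf q (c * q ^ k) ≠ 0)
    (hddef : ∀ k : ℤ, qpInf q (d * q ^ k) ≠ 0)
    (hbden : ∀ (j : Fin m) (k : ℤ), qpz q (b j) k ≠ 0)
    (hgden : ∀ k : ℤ, qpz q g k ≠ 0) (hhden : ∀ k : ℤ, qpz q h k ≠ 0)
    (hgqden : ∀ k : ℤ, qpz q (g/q) k ≠ 0) (hhqden : ∀ k : ℤ, qpz q (h/q) k ≠ 0)
    (hs1 : Summable fun k : ℤ => ‖biTerm q t a b c d g h k‖)
    (hs2 : Summable fun k : ℤ => ‖biTerm q t a b (c*q) (d/q) g h k‖)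
    (hs3 : Summable fun k : ℤ => ‖biTerm q t a b (c/q) (d*q) g h k‖)
    (hs4 : Summable fun k : ℤ => ‖biTerm q t a b (c/q) (d/q) (g/q) (h/q) k‖) :
    (c-q)*(d-q)*(-(g*h) - c*d*q + c*g*q + d*g*q + c*h*q + d*h*q - g*h*q - c*d*q^2)
        / ((g-q)*(h-q)*(c*q-d)*(d*q-c)) * (∑' k : ℤ, biTerm q t a b c d g h k)
      + (c-1)*(d-g)*(d-h)*(c-q)*q / ((d-c)*(g-q)*(h-q)*(c*q-d))
          * (∑' k : ℤ, biTerm q t a b (c*q) (d/q) g h k)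
      + (d-1)*(c-g)*(c-h)*(d-q)*q / ((c-d)*(g-q)*(h-q)*(d*q-c))
          * (∑' k : ℤ, biTerm q t a b (c/q) (d*q) g h k)
      + (∑' k : ℤ, biTerm q t a b (c/q) (d/q) (g/q) (h/q) k) = 0 :=
  four_term_contiguous_bilateral_first_general q t hq0 hq1 r m a b c d g h hcd hcqd hdqc hg hh hcdef
    hddef hs1 hs2 hs3
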